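/- Let C be a code on n neurons and D a code on m neurons, and let C ⊔ D be the code on n + m neurons whose codewords are the codewords of C (on the first n indices) together with the codewords of D (shifted to the last m indices). Then for every d ≥ 1, C ⊔ D has a non-degenerate convex realization in ℝ^d if and only if both C and D have non-degenerate convex realizations in ℝ^d. Consequently nddim(C ⊔ D) = max{nddim(C), nddim(D)}. -/

import Mathlib

open Set

noncomputable section

/-- Euclidean space `ℝ^d`. -/
abbrev Euc (d : ℕ) : Type := EuclideanSpace ℝ (Fin d)

/-- The code of a collection of sets `U = (U 0, …, U (n-1))` in `ℝ^d`. -/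
def codeOf {n d : ℕ} (U : Fin n → Set (Euc d)) : Set (Finset (Fin n)) :=
  {σ | ∃ p : Euc d, ∀ i : Fin n, p ∈ U i ↔ i ∈ σ}

/-- `U` is an open convex realization of the code `C`. -/
def IsOpenReal {n d : ℕ} (C : Set (Finset (Fin n))) (U : Fin n → Set (Euc d)) : Prop :=
  (∀ i, Convex ℝ (U i)) ∧ (∀ i, IsOpen (U i)) ∧ codeOf U = C

/-- `X` is a closed convex realization of the code `C`. -/
def IsClosedReal {n d : ℕ} (C : Set (Finset (Fin n))) (X : Fin n → Set (Euc d)) : Prop :=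
  (∀ i, Convex ℝ (X i)) ∧ (∀ i, IsClosed (X i)) ∧ codeOf X = C

/-- `C` has an open convex realization in `ℝ^d`. -/
def HasOpenReal {n : ℕ} (C : Set (Finset (Fin n))) (d : ℕ) : Prop :=
  ∃ U : Fin n → Set (Euc d), IsOpenReal C U

/-- `C` has a closed convex realization in `ℝ^d`. -/
def HasClosedReal {n : ℕ} (C : Set (Finset (Fin n))) (d : ℕ) : Prop :=
  ∃ X : Fin n → Set (Euc d), IsClosedReal C X

/-- `U` is a non-degenerate open convex realization of `C`: it is an open convex
realization and the closures of its sets realize the same code. -/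
def IsNondegOpenReal {n d : ℕ} (C : Set (Finset (Fin n))) (U : Fin n → Set (Euc d)) : Prop :=
  IsOpenReal C U ∧ codeOf (fun i => closure (U i)) = C

/-- `X` is a non-degenerate closed convex realization of `C`: it is a closed convex
realization and the interiors of its sets realize the same code. -/
def IsNondegClosedReal {n d : ℕ} (C : Set (Finset (Fin n))) (X : Fin n → Set (Euc d)) : Prop :=
  IsClosedReal C X ∧ codeOf (fun i => interior (X i)) = C

/-- `C` has a non-degenerate (open or closed) convex realization in `ℝ^d`. -/
def HasNondegReal {n : ℕ} (C : Set (Finset (Fin n))) (d : ℕ) : Prop :=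
  (∃ U : Fin n → Set (Euc d), IsNondegOpenReal C U) ∨
  (∃ X : Fin n → Set (Euc d), IsNondegClosedReal C X)

/-- Open embedding dimension (`⊤` if no open convex realization exists). -/
def odim {n : ℕ} (C : Set (Finset (Fin n))) : ℕ∞ :=
  sInf {e : ℕ∞ | ∃ d : ℕ, e = d ∧ HasOpenReal C d}

/-- Closed embedding dimension (`⊤` if no closed convex realization exists). -/
def cdim {n : ℕ} (C : Set (Finset (Fin n))) : ℕ∞ :=
  sInf {e : ℕ∞ | ∃ d : ℕ, e = d ∧ HasClosedReal C d}

/-- Non-degenerate embedding dimension (`⊤` if no non-degenerate realization exists). -/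
def nddim {n : ℕ} (C : Set (Finset (Fin n))) : ℕ∞ :=
  sInf {e : ℕ∞ | ∃ d : ℕ, e = d ∧ HasNondegReal C d}

/-- Embedding of `Fin n` into the first `n` indices of `Fin (n + m)`. -/
def finLeftEmb (n m : ℕ) : Fin n ↪ Fin (n + m) :=
  ⟨fun i => ⟨i.1, Nat.lt_of_lt_of_le i.2 (Nat.le_add_right n m)⟩,
    fun a b h => by apply Fin.ext; simpa using congrArg Fin.val h⟩

/-- Embedding of `Fin m` into the last `m` indices of `Fin (n + m)`. -/
def finRightEmb (n m : ℕ) : Fin m ↪ Fin (n + m) :=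
  ⟨fun i => ⟨n + i.1, Nat.add_lt_add_left i.2 n⟩,
    fun a b h => by apply Fin.ext; have := congrArg Fin.val h; simpa using this⟩

/-- The disjoint union `C ⊔ D` of a code on `n` neurons (on the first `n` indices)
and a code on `m` neurons (shifted to the last `m` indices). -/
def codeSum {n m : ℕ} (C : Set (Finset (Fin n))) (D : Set (Finset (Fin m))) :
    Set (Finset (Fin (n + m))) :=
  {τ | ∃ σ ∈ C, τ = σ.map (finLeftEmb n m)} ∪ {τ | ∃ σ ∈ D, τ = σ.map (finRightEmb n m)}

/-! Restricting a realization of `C ⊔ D` to the first `n` (resp. last `m`) neurons realizes `C`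
(resp. `D`), since a codeword of the other summand restricts to `∅ ∈ C`; the same holds for the
closures, so non-degeneracy is inherited.

Conversely, after replacing a non-degenerate closed realization by the interiors of its sets, both
codes have non-degenerate open realizations. Intersecting with a large ball that contains a
witness of every codeword of the sets and of their closures keeps both codes (for the closures
because `closure (s ∩ t) = closure s ∩ closure t` for open convex sets that meet). Translating the
second realization far from the first and taking both families together realizes `C ⊔ D`, a point
outside both balls giving the empty codeword. In `ℝ^0` all sets are empty and nothing needs to be
moved.

Non-degenerate realizability is monotone in the dimension (pull back along a coordinate
projection), so the equivalence gives the formula for `nddim`. -/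

open Filter Metric

section Codeword

variable {n m d : ℕ}

open Classical in
def codeword (U : Fin n → Set (Euc d)) (p : Euc d) : Finset (Fin n) :=
  Finset.univ.filter fun i => p ∈ U i

@[simp]
lemma mem_codeword {U : Fin n → Set (Euc d)} {p : Euc d} {i : Fin n} :
    i ∈ codeword U p ↔ p ∈ U i := by
  simp [codeword]

lemma codeOf_eq_range (U : Fin n → Set (Euc d)) : codeOf U = range (codeword U) := by
  ext σ
  simp [codeOf, Finset.ext_iff]

lemma codeword_eq_empty {U : Fin n → Set (Euc d)} {p : Euc d} (hp : p ∉ ⋃ i, U i) :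
    codeword U p = ∅ := by
  ext i
  simpa using fun h => hp (mem_iUnion_of_mem i h)

lemma codeOf_preimage {e : ℕ} {f : Euc e → Euc d} (hf : Function.Surjective f)
    (U : Fin n → Set (Euc d)) : codeOf (fun i => f ⁻¹' U i) = codeOf U := by
  rw [codeOf_eq_range, codeOf_eq_range, ← hf.range_comp]
  rfl

lemma nonempty_of_codeOf_subset {U V : Fin n → Set (Euc d)} (h : codeOf U ⊆ codeOf V)
    {i : Fin n} (hi : (U i).Nonempty) : (V i).Nonempty := by
  obtain ⟨p, hp⟩ := hi
  rw [codeOf_eq_range, codeOf_eq_range] at h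
  obtain ⟨q, hq⟩ := h (mem_range_self p)
  exact ⟨q, mem_codeword.1 (hq ▸ mem_codeword.2 hp)⟩

section Restrict

variable {U : Fin n → Set (Euc d)} {K : Set (Euc d)}

lemma inter_nonempty_of_forall_codeword (hK : ∀ σ ∈ codeOf U, ∃ p ∈ K, codeword U p = σ)
    {i : Fin n} (hi : (U i).Nonempty) : (U i ∩ K).Nonempty := by
  obtain ⟨p, hp⟩ := hi
  obtain ⟨q, hqK, hq⟩ := hK _ ((codeOf_eq_range U).symm ▸ mem_range_self p)
  exact ⟨q, mem_codeword.1 (hq ▸ mem_codeword.2 hp), hqK⟩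

lemma codeOf_inter_of_forall_codeword (h₀ : ∅ ∈ codeOf U)
    (hK : ∀ σ ∈ codeOf U, ∃ p ∈ K, codeword U p = σ) :
    codeOf (fun i => U i ∩ K) = codeOf U := by
  have hcw : ∀ p ∈ K, codeword (fun i => U i ∩ K) p = codeword U p := fun p hp => by
    ext i; simp [hp]
  apply Subset.antisymm
  · rw [codeOf_eq_range, codeOf_eq_range U]
    rintro _ ⟨p, rfl⟩
    by_cases hp : p ∈ K
    · exact ⟨p, (hcw p hp).symm⟩
    · rw [codeword_eq_empty (by simp [hp])]
      rwa [← codeOf_eq_range]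
  · intro σ hσ
    obtain ⟨p, hpK, rfl⟩ := hK σ hσ
    rw [codeOf_eq_range]
    exact ⟨p, hcw p hpK⟩

end Restrict

lemma codeOf_comp_embedding {k : ℕ} {f : Fin k ↪ Fin n} {V : Fin n → Set (Euc d)}
    {C : Set (Finset (Fin k))} (hC : ∅ ∈ C)
    (hsub : codeOf V ⊆ {τ | ∃ σ ∈ C, τ = σ.map f} ∪ {τ | ∀ i, f i ∉ τ})
    (hsup : {τ | ∃ σ ∈ C, τ = σ.map f} ⊆ codeOf V) :
    codeOf (fun i => V (f i)) = C := by
  rw [codeOf_eq_range] at hsub hsup ⊢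
  have hcw : ∀ p, codeword (fun i => V (f i)) p = (codeword V p).preimage f f.injective.injOn :=
    fun p => by ext i; simp
  ext σ
  constructor
  · rintro ⟨p, rfl⟩
    rcases hsub (mem_range_self p) with ⟨σ, hσ, hpσ⟩ | hp
    · simpa [hcw, hpσ] using hσ
    · convert hC
      ext i
      simpa using hp i
  · intro hσ
    obtain ⟨p, hp⟩ := hsup ⟨σ, hσ, rfl⟩
    exact ⟨p, by simp [hcw, hp]⟩

@[simp]
lemma finLeftEmb_apply (i : Fin n) : finLeftEmb n m i = Fin.castAdd m i := rfl

@[simp]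
lemma finRightEmb_apply (j : Fin m) : finRightEmb n m j = Fin.natAdd n j := rfl

@[simp]
lemma Fin.castAdd_ne_natAdd (i : Fin n) (j : Fin m) : Fin.castAdd m i ≠ Fin.natAdd n j := by
  simp only [ne_eq, Fin.ext_iff, Fin.val_castAdd, Fin.val_natAdd]
  omega

@[simp]
lemma Fin.natAdd_ne_castAdd (i : Fin n) (j : Fin m) : Fin.natAdd n j ≠ Fin.castAdd m i :=
  (Fin.castAdd_ne_natAdd i j).symm

end Codeword

section AddCases

variable {n m d : ℕ} {A : Fin n → Set (Euc d)} {B : Fin m → Set (Euc d)} {p : Euc d}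

lemma codeword_addCases_of_notMem_right (hp : p ∉ ⋃ j, B j) :
    codeword (Fin.addCases A B) p = (codeword A p).map (finLeftEmb n m) := by
  ext k
  induction k using Fin.addCases with
  | left i => simp
  | right j => simpa using fun h => hp (mem_iUnion_of_mem j h)

lemma codeword_addCases_of_notMem_left (hp : p ∉ ⋃ i, A i) :
    codeword (Fin.addCases A B) p = (codeword B p).map (finRightEmb n m) := by
  ext k
  induction k using Fin.addCases with
  | left i => simpa using fun h => hp (mem_iUnion_of_mem i h)
  | right j => simp

lemma codeOf_addCases (hAB : Disjoint (⋃ i, A i) (⋃ j, B j)) {p₀ : Euc d}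
    (hp₀A : p₀ ∉ ⋃ i, A i) (hp₀B : p₀ ∉ ⋃ j, B j) :
    codeOf (Fin.addCases A B) = codeSum (codeOf A) (codeOf B) := by
  simp only [codeSum, codeOf_eq_range]
  ext τ
  constructor
  · rintro ⟨p, rfl⟩
    by_cases hpA : p ∈ ⋃ i, A i
    · exact .inl ⟨_, mem_range_self p,
        codeword_addCases_of_notMem_right (disjoint_left.1 hAB hpA)⟩
    · exact .inr ⟨_, mem_range_self p, codeword_addCases_of_notMem_left hpA⟩
  · rintro (⟨_, ⟨p, rfl⟩, rfl⟩ | ⟨_, ⟨p, rfl⟩, rfl⟩)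
    · by_cases hpA : p ∈ ⋃ i, A i
      · exact ⟨p, codeword_addCases_of_notMem_right (disjoint_left.1 hAB hpA)⟩
      · refine ⟨p₀, ?_⟩
        rw [codeword_addCases_of_notMem_right hp₀B, codeword_eq_empty hpA,
          codeword_eq_empty hp₀A]
    · by_cases hpB : p ∈ ⋃ j, B j
      · exact ⟨p, codeword_addCases_of_notMem_left (disjoint_right.1 hAB hpB)⟩
      · refine ⟨p₀, ?_⟩
        rw [codeword_addCases_of_notMem_left hp₀A, codeword_eq_empty hpB,
          codeword_eq_empty hp₀B]

end AddCases

lemma Convex.closure_inter_eq_of_nonempty_interior {E : Type*} [AddCommGroup E] [Module ℝ E]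
    [TopologicalSpace E] [IsTopologicalAddGroup E] [ContinuousSMul ℝ E] {s t : Set E}
    (hs : Convex ℝ s) (ht : Convex ℝ t) (hst : (interior s ∩ interior t).Nonempty) :
    closure (s ∩ t) = closure s ∩ closure t := by
  refine (closure_inter_subset_inter_closure s t).antisymm fun z ⟨hzs, hzt⟩ => ?_
  obtain ⟨w, hws, hwt⟩ := hst
  have hseg : openSegment ℝ w z ⊆ s ∩ t :=
    subset_inter ((hs.openSegment_interior_closure_subset_interior hws hzs).trans interior_subset)
      ((ht.openSegment_interior_closure_subset_interior hwt hzt).trans interior_subset)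
  exact closure_mono hseg (segment_subset_closure_openSegment (right_mem_segment ℝ w z))

section Nondeg

variable {n m d : ℕ} {C : Set (Finset (Fin n))} {D : Set (Finset (Fin m))}
  {U : Fin n → Set (Euc d)}

lemma IsNondegClosedReal.isNondegOpenReal_interior {X : Fin n → Set (Euc d)}
    (hX : IsNondegClosedReal C X) :
    IsNondegOpenReal C (fun i => interior (X i)) := by
  obtain ⟨⟨hconv, hclosed, hcode⟩, hint⟩ := hX
  have hcl : ∀ i, closure (interior (X i)) = X i := fun i => by
    rcases (X i).eq_empty_or_nonempty with hi | hi
    · simp [hi]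
    · rw [(hconv i).closure_interior_eq_closure_of_nonempty_interior
        (nonempty_of_codeOf_subset (hcode.trans hint.symm).subset hi), (hclosed i).closure_eq]
  exact ⟨⟨fun i => (hconv i).interior, fun i => isOpen_interior, hint⟩, by simpa [hcl] using hcode⟩

lemma hasNondegReal_iff_exists_isNondegOpenReal :
    HasNondegReal C d ↔ ∃ U : Fin n → Set (Euc d), IsNondegOpenReal C U :=
  ⟨fun h => h.elim id fun ⟨_, hX⟩ => ⟨_, hX.isNondegOpenReal_interior⟩, .inl⟩

lemma IsNondegOpenReal.affine_preimage {e : ℕ} (hU : IsNondegOpenReal C U)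
    (f : Euc e →ᵃ[ℝ] Euc d) (hf : Function.Surjective f) :
    IsNondegOpenReal C (fun i => f ⁻¹' U i) := by
  obtain ⟨⟨hconv, hopen, hcode⟩, hcl⟩ := hU
  have hcont := f.continuous_of_finiteDimensional
  have hopenMap : IsOpenMap f := AffineMap.isOpenMap_linear_iff.1 <|
    f.linear.isOpenMap_of_finiteDimensional (f.linear_surjective_iff.2 hf)
  refine ⟨⟨fun i => (hconv i).affine_preimage f, fun i => (hopen i).preimage hcont,
    codeOf_preimage hf U ▸ hcode⟩, ?_⟩
  simp_rw [← hopenMap.preimage_closure_eq_closure_preimage hcont]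
  exact codeOf_preimage hf _ ▸ hcl

lemma IsNondegOpenReal.comp_embedding {k : ℕ} {f : Fin k ↪ Fin n} {E : Set (Finset (Fin k))}
    (hU : IsNondegOpenReal C U) (hE : ∅ ∈ E)
    (hsub : C ⊆ {τ | ∃ σ ∈ E, τ = σ.map f} ∪ {τ | ∀ i, f i ∉ τ})
    (hsup : {τ | ∃ σ ∈ E, τ = σ.map f} ⊆ C) :
    IsNondegOpenReal E (fun i => U (f i)) := by
  obtain ⟨⟨hconv, hopen, hcode⟩, hcl⟩ := hU
  exact ⟨⟨fun i => hconv (f i), fun i => hopen (f i),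
    codeOf_comp_embedding hE (hcode ▸ hsub) (hcode ▸ hsup)⟩,
    codeOf_comp_embedding (V := fun i => closure (U i)) hE (hcl ▸ hsub) (hcl ▸ hsup)⟩

lemma IsNondegOpenReal.codeSum_left {V : Fin (n + m) → Set (Euc d)}
    (hV : IsNondegOpenReal (codeSum C D) V) (hC : ∅ ∈ C) :
    IsNondegOpenReal C (fun i => V (finLeftEmb n m i)) :=
  hV.comp_embedding hC (union_subset_union_right _ fun _ ⟨σ, _, hτ⟩ i => by simp [hτ])
    subset_union_left

lemma IsNondegOpenReal.codeSum_right {V : Fin (n + m) → Set (Euc d)}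
    (hV : IsNondegOpenReal (codeSum C D) V) (hD : ∅ ∈ D) :
    IsNondegOpenReal D (fun j => V (finRightEmb n m j)) :=
  hV.comp_embedding hD ((union_comm _ _).subset.trans
    (union_subset_union_right _ fun _ ⟨σ, _, hτ⟩ j => by simp [hτ])) subset_union_right

lemma IsNondegOpenReal.addCases {T : Fin m → Set (Euc d)} (hU : IsNondegOpenReal C U)
    (hT : IsNondegOpenReal D T) (hUT : Disjoint (⋃ i, closure (U i)) (⋃ j, closure (T j)))
    {p₀ : Euc d} (hp₀U : p₀ ∉ ⋃ i, closure (U i)) (hp₀T : p₀ ∉ ⋃ j, closure (T j)) :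
    IsNondegOpenReal (codeSum C D) (Fin.addCases U T) := by
  obtain ⟨⟨hUconv, hUopen, hUcode⟩, hUcl⟩ := hU
  obtain ⟨⟨hTconv, hTopen, hTcode⟩, hTcl⟩ := hT
  have hUsub : (⋃ i, U i) ⊆ ⋃ i, closure (U i) := iUnion_mono fun i => subset_closure
  have hTsub : (⋃ j, T j) ⊆ ⋃ j, closure (T j) := iUnion_mono fun j => subset_closure
  have hcl : (fun k => closure (Fin.addCases U T k)) =
      Fin.addCases (fun i => closure (U i)) (fun j => closure (T j)) := by
    funext k
    induction k using Fin.addCases <;> simp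
  refine ⟨⟨fun k => ?_, fun k => ?_, ?_⟩, ?_⟩
  · induction k using Fin.addCases <;> simp [hUconv, hTconv]
  · induction k using Fin.addCases <;> simp [hUopen, hTopen]
  · rw [codeOf_addCases (hUT.mono hUsub hTsub) (fun h => hp₀U (hUsub h))
      (fun h => hp₀T (hTsub h)), hUcode, hTcode]
  · rw [hcl, codeOf_addCases hUT hp₀U hp₀T, hUcl, hTcl]

lemma eventually_forall_codeword_mem_ball (U : Fin n → Set (Euc d)) :
    ∀ᶠ R in atTop, ∀ σ ∈ codeOf U, ∃ p ∈ ball (0 : Euc d) R, codeword U p = σ := by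
  refine eventually_all.2 fun σ => ?_
  by_cases hσ : σ ∈ codeOf U
  · obtain ⟨p, rfl⟩ : σ ∈ range (codeword U) := codeOf_eq_range U ▸ hσ
    filter_upwards [eventually_gt_atTop ‖p‖] with R hR _ using ⟨p, mem_ball_zero_iff.2 hR, rfl⟩
  · exact .of_forall fun _ h => absurd h hσ

lemma IsNondegOpenReal.eventually_inter_ball (hU : IsNondegOpenReal C U) (hC : ∅ ∈ C) :
    ∀ᶠ R in atTop, IsNondegOpenReal C (fun i => U i ∩ ball 0 R) := by
  obtain ⟨⟨hconv, hopen, hcode⟩, hcl⟩ := hU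
  filter_upwards [eventually_forall_codeword_mem_ball U,
    eventually_forall_codeword_mem_ball (fun i => closure (U i))] with R hR hRcl
  have hclosure : ∀ i, closure (U i ∩ ball 0 R) = closure (U i) ∩ closure (ball 0 R) := by
    intro i
    rcases (U i).eq_empty_or_nonempty with hi | hi
    · simp [hi]
    · refine (hconv i).closure_inter_eq_of_nonempty_interior (convex_ball 0 R) ?_
      rw [(hopen i).interior_eq, isOpen_ball.interior_eq]
      exact inter_nonempty_of_forall_codeword hR hi
  refine ⟨⟨fun i => (hconv i).inter (convex_ball 0 R), fun i => (hopen i).inter isOpen_ball,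
    by rw [codeOf_inter_of_forall_codeword (hcode ▸ hC) hR, hcode]⟩, ?_⟩
  simp_rw [hclosure]
  rw [codeOf_inter_of_forall_codeword (hcl ▸ hC) fun σ hσ => ?_, hcl]
  obtain ⟨p, hp, hpσ⟩ := hRcl σ hσ
  exact ⟨p, subset_closure hp, hpσ⟩

lemma iUnion_closure_inter_ball_subset (U : Fin n → Set (Euc d)) (c : Euc d) (R : ℝ) :
    ⋃ i, closure (U i ∩ ball c R) ⊆ closedBall c R :=
  iUnion_subset fun _ => (closure_mono inter_subset_right).trans closure_ball_subset_closedBall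

lemma eq_empty_of_empty_mem_codeOf {U : Fin n → Set (Euc 0)} (h : ∅ ∈ codeOf U) (i : Fin n) :
    U i = ∅ := by
  obtain ⟨p, hp⟩ := h
  refine eq_empty_of_forall_notMem fun q hq => ?_
  rw [Subsingleton.elim q p, hp i] at hq
  exact Finset.notMem_empty i hq

lemma IsNondegOpenReal.addCases_zero {U : Fin n → Set (Euc 0)} {W : Fin m → Set (Euc 0)}
    (hU : IsNondegOpenReal C U) (hW : IsNondegOpenReal D W) (hC : ∅ ∈ C) (hD : ∅ ∈ D) :
    IsNondegOpenReal (codeSum C D) (Fin.addCases U W) := by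
  have hUe := eq_empty_of_empty_mem_codeOf (hU.1.2.2 ▸ hC)
  have hWe := eq_empty_of_empty_mem_codeOf (hW.1.2.2 ▸ hD)
  exact hU.addCases hW (by simp [hUe, hWe]) (p₀ := 0) (by simp [hUe]) (by simp [hWe])

lemma IsNondegOpenReal.exists_codeSum_succ {U : Fin n → Set (Euc (d + 1))}
    {W : Fin m → Set (Euc (d + 1))} (hU : IsNondegOpenReal C U) (hW : IsNondegOpenReal D W)
    (hC : ∅ ∈ C) (hD : ∅ ∈ D) :
    ∃ V : Fin (n + m) → Set (Euc (d + 1)), IsNondegOpenReal (codeSum C D) V := by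
  obtain ⟨R, ⟨hUR, hWR⟩, hR⟩ :=
    (((hU.eventually_inter_ball hC).and (hW.eventually_inter_ball hD)).and
      (eventually_gt_atTop 0)).exists
  obtain ⟨v, hv⟩ := exists_norm_eq (Euc (d + 1)) (show 0 ≤ 3 * R by positivity)
  let f := (AffineEquiv.constVAdd ℝ (Euc (d + 1)) (-v)).toAffineMap
  have hf : f ⁻¹' ball 0 R = ball v R := by
    ext x
    simp [f, dist_eq_norm, neg_add_eq_sub]
  have hT := hWR.affine_preimage f (AffineEquiv.surjective _)
  simp only [preimage_inter, hf] at hT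
  refine ⟨_, hUR.addCases hT (p₀ := -v) ?_ ?_ ?_⟩
  · refine (closedBall_disjoint_closedBall ?_).mono (iUnion_closure_inter_ball_subset _ _ _)
      (iUnion_closure_inter_ball_subset _ _ _)
    rw [dist_zero_left, hv]
    linarith
  · refine fun h => (mem_closedBall.1 (iUnion_closure_inter_ball_subset _ _ _ h)).not_gt ?_
    rw [dist_zero_right, norm_neg, hv]
    linarith
  · refine fun h => (mem_closedBall.1 (iUnion_closure_inter_ball_subset _ _ _ h)).not_gt ?_
    rw [dist_eq_norm, ← neg_add', norm_neg, ← two_smul ℝ, norm_smul, Real.norm_ofNat, hv]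
    linarith

end Nondeg

lemma HasNondegReal.mono {n d e : ℕ} {C : Set (Finset (Fin n))} (h : HasNondegReal C d)
    (hde : d ≤ e) : HasNondegReal C e := by
  obtain ⟨U, hU⟩ := hasNondegReal_iff_exists_isNondegOpenReal.1 h
  let π : Euc e →ₗ[ℝ] Euc d := (WithLp.linearEquiv 2 ℝ (Fin d → ℝ)).symm.toLinearMap ∘ₗ
    LinearMap.funLeft ℝ ℝ (Fin.castLE hde) ∘ₗ (WithLp.linearEquiv 2 ℝ (Fin e → ℝ)).toLinearMap
  have hπ : Function.Surjective π := by
    simp only [π, LinearMap.coe_comp]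
    exact (LinearEquiv.surjective _).comp
      ((LinearMap.funLeft_surjective_of_injective _ _ _ (Fin.castLE_injective hde)).comp
        (LinearEquiv.surjective _))
  exact .inl ⟨_, hU.affine_preimage π.toAffineMap hπ⟩

lemma hasNondegReal_codeSum_iff {n m d : ℕ} {C : Set (Finset (Fin n))}
    {D : Set (Finset (Fin m))} (hC : ∅ ∈ C) (hD : ∅ ∈ D) :
    HasNondegReal (codeSum C D) d ↔ HasNondegReal C d ∧ HasNondegReal D d := by
  simp only [hasNondegReal_iff_exists_isNondegOpenReal]
  refine ⟨fun ⟨V, hV⟩ => ⟨⟨_, hV.codeSum_left hC⟩, ⟨_, hV.codeSum_right hD⟩⟩,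
    fun ⟨⟨U, hU⟩, ⟨W, hW⟩⟩ => ?_⟩
  cases d with
  | zero => exact ⟨_, hU.addCases_zero hW hC hD⟩
  | succ d => exact hU.exists_codeSum_succ hW hC hD

lemma sInf_natCast_and_eq_max {P Q : ℕ → Prop} (hP : Monotone P) (hQ : Monotone Q) :
    sInf {e : ℕ∞ | ∃ d : ℕ, e = d ∧ (P d ∧ Q d)} =
      max (sInf {e : ℕ∞ | ∃ d : ℕ, e = d ∧ P d}) (sInf {e : ℕ∞ | ∃ d : ℕ, e = d ∧ Q d}) := by
  refine le_antisymm (not_lt.1 fun h => ?_) (max_le (sInf_le_sInf ?_) (sInf_le_sInf ?_))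
  · obtain ⟨_, ⟨a, rfl, ha⟩, ha'⟩ := sInf_lt_iff.1 ((le_max_left _ _).trans_lt h)
    obtain ⟨_, ⟨b, rfl, hb⟩, hb'⟩ := sInf_lt_iff.1 ((le_max_right _ _).trans_lt h)
    have hab : sInf {e : ℕ∞ | ∃ d : ℕ, e = d ∧ (P d ∧ Q d)} ≤ (max a b : ℕ) :=
      sInf_le ⟨max a b, rfl, hP (le_max_left a b) ha, hQ (le_max_right a b) hb⟩
    rw [Nat.mono_cast.map_max] at hab
    exact (hab.trans_lt (max_lt ha' hb')).false
  · rintro _ ⟨d, rfl, hd, -⟩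
    exact ⟨d, rfl, hd⟩
  · rintro _ ⟨d, rfl, -, hd⟩
    exact ⟨d, rfl, hd⟩

/-- `C ⊔ D` has a non-degenerate convex realization in `ℝ^d` iff both `C` and `D` do;
consequently `nddim (C ⊔ D) = max (nddim C) (nddim D)`. -/
theorem codeSum_nondeg {n m : ℕ} (C : Set (Finset (Fin n))) (D : Set (Finset (Fin m)))
    (hC : ∅ ∈ C) (hD : ∅ ∈ D) :
    (∀ d : ℕ, 1 ≤ d → (HasNondegReal (codeSum C D) d ↔ HasNondegReal C d ∧ HasNondegReal D d)) ∧
    nddim (codeSum C D) = max (nddim C) (nddim D) := by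
  refine ⟨fun d _ => hasNondegReal_codeSum_iff hC hD, ?_⟩
  simp only [nddim, hasNondegReal_codeSum_iff hC hD]
  exact sInf_natCast_and_eq_max (fun _ _ hde h => h.mono hde) (fun _ _ hde h => h.mono hde)

end
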